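/- For z, w in the open unit disc, the Poincaré distance k(z,w) = arctanh(|z-w|/|1-conj(z)·w|) satisfies: if |z-w|² ≤ (1-|z|)(1-|w|), then |z-w|/(8√((1-|z|)(1-|w|))) ≤ k(z,w) ≤ 2|z-w|/√((1-|z|)(1-|w|)). -/

import Mathlib

/-!
With `q = √((1 - |z|²)(1 - |w|²))`, the identity `|1 - z̄w|² = q² + |z - w|²` turns the Poincaré
distance into `k(z, w) = arsinh (|z - w| / q)`. Since `√((1 - |z|)(1 - |w|)) ≤ q ≤ 2√((1 - |z|)(1 - |w|))`,
the hypothesis puts `t = |z - w| / q` in `[0, 1]`, where `t / 2 ≤ arsinh t ≤ t`.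
-/

noncomputable def arctanh (t : ℝ) : ℝ := Real.log ((1 + t) / (1 - t)) / 2

open Real ComplexConjugate

lemma arctanh_div_sqrt_one_add_sq (x : ℝ) : arctanh (x / √(1 + x ^ 2)) = arsinh x := by
  set r := √(1 + x ^ 2)
  have hr : r ^ 2 = 1 + x ^ 2 := sq_sqrt (by positivity)
  have hxr : x < r := by nlinarith [sqrt_nonneg (1 + x ^ 2)]
  have hquot : (1 + x / r) / (1 - x / r) = (x + r) ^ 2 := by
    have hr0 : r ≠ 0 := by positivity
    rw [div_eq_iff (by rw [sub_ne_zero, ne_eq, eq_div_iff hr0]; linarith)]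
    field_simp
    linear_combination (-x - r) * hr
  rw [arctanh, hquot, log_pow, arsinh]
  push_cast
  ring

lemma arctanh_div_eq_arsinh_div {a q D : ℝ} (hq : 0 < q) (hD : 0 ≤ D)
    (hD2 : D ^ 2 = q ^ 2 + a ^ 2) : arctanh (a / D) = arsinh (a / q) := by
  have hD' : D = q * √(1 + (a / q) ^ 2) := by
    rw [← sqrt_sq hD, hD2, show q ^ 2 + a ^ 2 = q ^ 2 * (1 + (a / q) ^ 2) by field_simp,
      sqrt_mul (sq_nonneg q), sqrt_sq hq.le]
  rw [← arctanh_div_sqrt_one_add_sq, hD', ← div_div]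

lemma Complex.norm_one_sub_conj_mul_sq (z w : ℂ) :
    ‖1 - conj z * w‖ ^ 2 = (1 - ‖z‖ ^ 2) * (1 - ‖w‖ ^ 2) + ‖z - w‖ ^ 2 := by
  simp only [Complex.sq_norm, Complex.normSq_apply, Complex.sub_re, Complex.sub_im,
    Complex.one_re, Complex.one_im, Complex.mul_re, Complex.mul_im, Complex.conj_re,
    Complex.conj_im]
  ring

lemma Complex.arctanh_eq_arsinh {z w : ℂ} (hz : ‖z‖ < 1) (hw : ‖w‖ < 1) :
    arctanh (‖z - w‖ / ‖1 - conj z * w‖) =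
      arsinh (‖z - w‖ / √((1 - ‖z‖ ^ 2) * (1 - ‖w‖ ^ 2))) := by
  have hz2 : 0 < 1 - ‖z‖ ^ 2 := by nlinarith [norm_nonneg z]
  have hw2 : 0 < 1 - ‖w‖ ^ 2 := by nlinarith [norm_nonneg w]
  refine arctanh_div_eq_arsinh_div (by positivity) (norm_nonneg _) ?_
  rw [sq_sqrt (by positivity), Complex.norm_one_sub_conj_mul_sq]

lemma arsinh_le_self {x : ℝ} (hx : 0 ≤ x) : arsinh x ≤ x := by
  simpa only [arsinh_sinh] using arsinh_le_arsinh.2 (self_le_sinh_iff.2 hx)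

lemma half_le_arsinh {x : ℝ} (hx0 : 0 ≤ x) (hx1 : x ≤ 1) : x / 2 ≤ arsinh x := by
  have h1 : 1 ≤ √(1 + x ^ 2) := one_le_sqrt.2 (by nlinarith)
  calc x / 2 ≤ 2 * x / (x + 2) := by rw [le_div_iff₀ (by linarith)]; nlinarith
    _ ≤ log (1 + x) := le_log_one_add_of_nonneg hx0
    _ ≤ log (x + √(1 + x ^ 2)) := log_le_log (by linarith) (by linarith)

lemma sqrt_one_sub_mul_le_sqrt_one_sub_sq_mul {x y : ℝ} (hx0 : 0 ≤ x) (hy0 : 0 ≤ y)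
    (hx1 : x ≤ 1) (hy1 : y ≤ 1) :
    √((1 - x) * (1 - y)) ≤ √((1 - x ^ 2) * (1 - y ^ 2)) := by
  apply sqrt_le_sqrt
  nlinarith [mul_nonneg (mul_nonneg (sub_nonneg.2 hx1) (sub_nonneg.2 hy1))
    (by positivity : 0 ≤ x + y + x * y)]

lemma sqrt_one_sub_sq_mul_le_two_mul_sqrt {x y : ℝ} (hx0 : 0 ≤ x) (hx1 : x ≤ 1) (hy1 : y ≤ 1) :
    √((1 - x ^ 2) * (1 - y ^ 2)) ≤ 2 * √((1 - x) * (1 - y)) := by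
  rw [show (2 : ℝ) = √(2 ^ 2) by simp, ← sqrt_mul (by positivity)]
  apply sqrt_le_sqrt
  nlinarith [mul_nonneg (mul_nonneg (sub_nonneg.2 hx1) (sub_nonneg.2 hy1))
    (by nlinarith : 0 ≤ 3 - x - y - x * y)]

theorem stmt_19 (z w : ℂ) (hz : ‖z‖ < 1) (hw : ‖w‖ < 1)
    (h : ‖z - w‖ ^ 2 ≤ (1 - ‖z‖) * (1 - ‖w‖)) :
    ‖z - w‖ / (8 * Real.sqrt ((1 - ‖z‖) * (1 - ‖w‖))) ≤
      arctanh (‖z - w‖ / ‖1 - (starRingEnd ℂ) z * w‖) ∧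
    arctanh (‖z - w‖ / ‖1 - (starRingEnd ℂ) z * w‖) ≤
      2 * ‖z - w‖ / Real.sqrt ((1 - ‖z‖) * (1 - ‖w‖)) := by
  rw [Complex.arctanh_eq_arsinh hz hw]
  set a := ‖z - w‖
  set s := √((1 - ‖z‖) * (1 - ‖w‖))
  set q := √((1 - ‖z‖ ^ 2) * (1 - ‖w‖ ^ 2))
  have ha : 0 ≤ a := norm_nonneg _
  have hs : 0 < s := sqrt_pos.2 (mul_pos (by linarith) (by linarith))
  have hsq : s ≤ q := sqrt_one_sub_mul_le_sqrt_one_sub_sq_mul (norm_nonneg z) (norm_nonneg w)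
    hz.le hw.le
  have hqs : q ≤ 2 * s := sqrt_one_sub_sq_mul_le_two_mul_sqrt (norm_nonneg z) hz.le hw.le
  have hq : 0 < q := hs.trans_le hsq
  have has : a ≤ s := (le_sqrt ha (by positivity)).2 h
  have hts : a / q ≤ a / s := div_le_div_of_nonneg_left ha hs hsq
  have ht1 : a / q ≤ 1 := hts.trans ((div_le_one hs).2 has)
  constructor
  · calc a / (8 * s) ≤ a / q / 2 := by
          rw [div_div]; exact div_le_div_of_nonneg_left ha (by positivity) (by linarith)
      _ ≤ arsinh (a / q) := half_le_arsinh (by positivity) ht1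
  · calc arsinh (a / q) ≤ a / q := arsinh_le_self (by positivity)
      _ ≤ a / s := hts
      _ ≤ 2 * a / s := by gcongr; linarith
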